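/- Let u, τ, y ∈ ℂ satisfy (2y² − 9) − (y⁴ − 7y² + 14)u + (2y² − 9)u² − u³ = 0 and τ = (5y⁴ − 37y² + 36)u + (7 − 5y²)u². Then T(τ, y) = 0, where T(τ, y) = τ³ + τ²(−47 + 14y² − 5y⁴) + τ(−5138 + 10057y² − 7830y⁴ + 3213y⁶ − 640y⁸ + 50y¹⁰) − 120447 + 339345y² − 371691y⁴ + 203917y⁶ − 60090y⁸ + 8850y¹⁰ − 500y¹². -/

import Mathlib

/-- Elimination of `u` for the `5₂` knot torsion: if
`(2y² − 9) − (y⁴ − 7y² + 14)u + (2y² − 9)u² − u³ = 0` and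
`τ = (5y⁴ − 37y² + 36)u + (7 − 5y²)u²`, then `T(τ, y) = 0`. -/
theorem stmt_13 (u τ y : ℂ)
    (hu : (2 * y ^ 2 - 9) - (y ^ 4 - 7 * y ^ 2 + 14) * u
        + (2 * y ^ 2 - 9) * u ^ 2 - u ^ 3 = 0)
    (hτ : τ = (5 * y ^ 4 - 37 * y ^ 2 + 36) * u + (7 - 5 * y ^ 2) * u ^ 2) :
    τ ^ 3 + τ ^ 2 * (-47 + 14 * y ^ 2 - 5 * y ^ 4)
      + τ * (-5138 + 10057 * y ^ 2 - 7830 * y ^ 4 + 3213 * y ^ 6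
          - 640 * y ^ 8 + 50 * y ^ 10)
      - 120447 + 339345 * y ^ 2 - 371691 * y ^ 4 + 203917 * y ^ 6
      - 60090 * y ^ 8 + 8850 * y ^ 10 - 500 * y ^ 12 = 0 := by
  subst hτ
  -- `T(τ, y)` is the characteristic polynomial of multiplication by `τ` on `ℚ(y)[u]/(cubic)`,
  -- so `T(τ(u), y)` is divisible by the cubic in `u`; the multiplier below is the quotient
  -- (its leading coefficient `(5y² − 7)³` matches that of `T(τ(u), y) = (7 − 5y²)³ u⁶ + ⋯`).
  linear_combination
    ((-250 * y ^ 10 + 3300 * y ^ 8 - 15195 * y ^ 6 + 33581 * y ^ 4 - 34731 * y ^ 2 + 13383)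
      + (-125 * y ^ 8 + 1975 * y ^ 6 - 4545 * y ^ 4 + 3025 * y ^ 2 - 266) * u
      + (-125 * y ^ 8 + 1650 * y ^ 6 - 5010 * y ^ 4 + 5698 * y ^ 2 - 2205) * u ^ 2
      + (5 * y ^ 2 - 7) ^ 3 * u ^ 3) * hu
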